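/- arXiv:2108.08047 — 2 statements merged into one kernel-verified Lean document; each statement's English description precedes it below -/
import Mathlib

section
/- Let A be a p×p random Hermitian matrix with radial distribution (A =ᵈ QAQᴴ for every unitary Q) and finite second moments. Then E[A] = σI for some real σ, and the covariance matrix of vec(A) has the form τ₁I_{p²} + τ₂vec(I)vec(I)ᵀ with τ₁ = Var(a₁₂) and τ₂ = Cov(a₁₁, a₂₂) (p ≥ 2); i.e., all fourth-index covariance coefficients τ_{ijkl} = Cov(a_{ki}, a_{lj}) vanish unless (i=j=k=l), (i=j≠k=l), or (i=k≠j=l), and τ_{iiii} = τ₁ + τ₂. -/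
open MeasureTheory Matrix

/-- Matrices inherit the product measurable structure of `m → n → α`. -/
instance matrixMeasurableSpace {m n α : Type*} [MeasurableSpace α] :
    MeasurableSpace (Matrix m n α) :=
  MeasurableSpace.pi (X := fun _ : m => n → α)

section RadialAux

variable {p : ℕ}

private lemma meas_entry (i j : Fin p) :
    Measurable (fun M : Matrix (Fin p) (Fin p) ℂ => M i j) :=
  (measurable_pi_apply j).comp (measurable_pi_apply i)

private lemma meas_conjmul (Q : Matrix (Fin p) (Fin p) ℂ) :
    Measurable (fun M : Matrix (Fin p) (Fin p) ℂ => Q * M * Qᴴ) := by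
  apply measurable_pi_lambda
  intro i
  apply measurable_pi_lambda
  intro j
  simp only [Matrix.mul_apply]
  exact Finset.measurable_sum _ fun b _ =>
    (Finset.measurable_sum _ fun a _ => ((meas_entry a b).const_mul _)).mul_const _

variable {Ω : Type*} [MeasurableSpace Ω] {μ : Measure Ω}

private lemma transfer_int (A : Ω → Matrix (Fin p) (Fin p) ℂ) (hmeas : AEMeasurable A μ)
    (hradial : ∀ Q : Matrix.unitaryGroup (Fin p) ℂ,
      μ.map (fun ω => (Q : Matrix (Fin p) (Fin p) ℂ) * A ω
        * (Q : Matrix (Fin p) (Fin p) ℂ)ᴴ) = μ.map A)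
    (Q : Matrix (Fin p) (Fin p) ℂ) (hQ : Q ∈ Matrix.unitaryGroup (Fin p) ℂ)
    (f : Matrix (Fin p) (Fin p) ℂ → ℂ) (hf : Measurable f) :
    ∫ ω, f (Q * A ω * Qᴴ) ∂μ = ∫ ω, f (A ω) ∂μ := by
  have hA' : AEMeasurable (fun ω => Q * A ω * Qᴴ) μ :=
    (meas_conjmul _).comp_aemeasurable hmeas
  have h1 : ∫ ω, f (Q * A ω * Qᴴ) ∂μ = ∫ M, f M ∂(μ.map (fun ω => Q * A ω * Qᴴ)) :=
    (integral_map hA' hf.aestronglyMeasurable).symm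
  have h2 : μ.map (fun ω => Q * A ω * Qᴴ) = μ.map A := hradial ⟨Q, hQ⟩
  rw [h1, h2, integral_map hmeas hf.aestronglyMeasurable]

/-- generalized permutation matrix -/
private def gpm (σ : Equiv.Perm (Fin p)) (d : Fin p → ℂ) : Matrix (Fin p) (Fin p) ℂ :=
  Matrix.of fun i j => if σ i = j then d i else 0

private lemma gpm_unitary (σ : Equiv.Perm (Fin p)) (d : Fin p → ℂ)
    (hd : ∀ x, d x * star (d x) = 1) : gpm σ d ∈ Matrix.unitaryGroup (Fin p) ℂ := by
  rw [Matrix.mem_unitaryGroup_iff]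
  ext i j
  simp only [Matrix.mul_apply, Matrix.star_apply, gpm, Matrix.of_apply]
  by_cases h : i = j
  · subst h
    have h2 : ∀ b, (if σ i = b then d i else 0) * star (if σ i = b then d i else 0)
        = if σ i = b then (1 : ℂ) else 0 := by
      intro b; by_cases hb : σ i = b
      · simp only [if_pos hb]; exact hd i
      · simp only [if_neg hb]; simp
    simp only [h2, Finset.sum_ite_eq, Finset.mem_univ, if_true, Matrix.one_apply_eq]
  · rw [Matrix.one_apply_ne h]
    apply Finset.sum_eq_zero
    intro b _
    by_cases hb : σ i = b
    · have : σ j ≠ b := fun hc => h (σ.injective (hb.trans hc.symm))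
      simp [hb, this]
    · simp [hb]

private lemma gpm_conj (σ : Equiv.Perm (Fin p)) (d : Fin p → ℂ)
    (M : Matrix (Fin p) (Fin p) ℂ) (i j : Fin p) :
    (gpm σ d * M * (gpm σ d)ᴴ) i j = d i * star (d j) * M (σ i) (σ j) := by
  have h1 : ∀ b, (∑ a, (if σ i = a then d i else 0) * M a b) = d i * M (σ i) b := by
    intro b
    simp only [ite_mul, zero_mul, Finset.sum_ite_eq, Finset.mem_univ, if_true]
  simp only [Matrix.mul_apply, Matrix.conjTranspose_apply, gpm, Matrix.of_apply, h1]
  have h2 : ∀ b, (d i * M (σ i) b) * star (if σ j = b then d j else 0)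
      = if σ j = b then d i * star (d j) * M (σ i) b else 0 := by
    intro b; by_cases hb : σ j = b
    · rw [if_pos hb, if_pos hb]; ring
    · rw [if_neg hb, if_neg hb]; simp
  simp only [h2, Finset.sum_ite_eq, Finset.mem_univ, if_true]

private noncomputable def rc : ℂ := ((Real.sqrt 2)⁻¹ : ℝ)

private lemma rc_mul_rc : rc * rc = 1/2 := by
  have h : (Real.sqrt 2)⁻¹ * (Real.sqrt 2)⁻¹ = (1/2 : ℝ) := by
    rw [← mul_inv, Real.mul_self_sqrt (by norm_num)]
    norm_num
  rw [rc, ← Complex.ofReal_mul, h]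
  norm_num

private lemma star_rc : star rc = rc := by simp [rc, Complex.star_def, Complex.conj_ofReal]

private noncomputable def had (e0 e1 : Fin p) : Matrix (Fin p) (Fin p) ℂ :=
  Matrix.of fun i j =>
    if i = e0 then (if j = e0 then rc else if j = e1 then rc else 0)
    else if i = e1 then (if j = e0 then rc else if j = e1 then -rc else 0)
    else if i = j then 1 else 0

private lemma sum_two (e0 e1 : Fin p) (h : e0 ≠ e1) (x y : ℂ) (f : Fin p → ℂ) :
    (∑ k, (if k = e0 then x else if k = e1 then y else 0) * f k) = x * f e0 + y * f e1 := by
  have h2 : ∀ k, (if k = e0 then x else if k = e1 then y else 0) * f k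
      = (if k = e0 then x * f e0 else 0) + (if k = e1 then y * f e1 else 0) := by
    intro k
    by_cases h1 : k = e0
    · subst h1; simp [h, Ne.symm h]
    · by_cases hk : k = e1 <;> simp [h1, hk, Ne.symm h]
  rw [Finset.sum_congr rfl fun k _ => h2 k, Finset.sum_add_distrib]
  simp [Finset.sum_ite_eq']

private lemma sum_two' (e0 e1 : Fin p) (h : e0 ≠ e1) (x y : ℂ) (f : Fin p → ℂ) :
    (∑ k, f k * (if k = e0 then x else if k = e1 then y else 0)) = f e0 * x + f e1 * y := by
  have := sum_two e0 e1 h x y f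
  simp_rw [mul_comm] at this ⊢
  exact this

private lemma hrow0 (e0 e1 : Fin p) :
    ∀ k, had e0 e1 e0 k = if k = e0 then rc else if k = e1 then rc else 0 := by
  intro k; simp [had]

private lemma hrow1 (e0 e1 : Fin p) (h01 : e0 ≠ e1) :
    ∀ k, had e0 e1 e1 k = if k = e0 then rc else if k = e1 then -rc else 0 := by
  intro k; simp [had, Ne.symm h01]

private lemma hrowo (e0 e1 : Fin p) :
    ∀ i, i ≠ e0 → i ≠ e1 → ∀ k, had e0 e1 i k = if i = k then 1 else 0 := by
  intro i hi0 hi1 k; simp [had, hi0, hi1]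

private lemma had_star_entry (e0 e1 : Fin p) :
    ∀ i k, star (had e0 e1 i k) = had e0 e1 i k := by
  intro i k
  unfold had
  simp only [Matrix.of_apply]
  split_ifs <;> simp [star_rc]

private lemma had_unitary (e0 e1 : Fin p) (h01 : e0 ≠ e1) :
    had e0 e1 ∈ Matrix.unitaryGroup (Fin p) ℂ := by
  rw [Matrix.mem_unitaryGroup_iff]
  ext i j
  simp only [Matrix.mul_apply, Matrix.star_apply, had_star_entry]
  by_cases hi0 : i = e0
  · rw [hi0]
    simp only [hrow0]
    rw [sum_two e0 e1 h01 rc rc (fun k => had e0 e1 j k)]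
    by_cases hj0 : j = e0
    · rw [hj0]
      simp [hrow0, Ne.symm h01, Matrix.one_apply]
      linear_combination 2 * rc_mul_rc
    · by_cases hj1 : j = e1
      · rw [hj1]
        simp [hrow1 e0 e1 h01, h01, Ne.symm h01, Matrix.one_apply, Ne.symm hj0]
      · simp [hrowo e0 e1 j hj0 hj1, hj0, hj1, Matrix.one_apply, Ne.symm hj0]
  · by_cases hi1 : i = e1
    · rw [hi1]
      simp only [hrow1 e0 e1 h01]
      rw [sum_two e0 e1 h01 rc (-rc) (fun k => had e0 e1 j k)]
      by_cases hj0 : j = e0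
      · rw [hj0]
        simp [hrow0, Ne.symm h01, Matrix.one_apply, h01]
      · by_cases hj1 : j = e1
        · rw [hj1]
          simp [hrow1 e0 e1 h01, Ne.symm h01, Matrix.one_apply]
          linear_combination 2 * rc_mul_rc
        · simp [hrowo e0 e1 j hj0 hj1, hj0, hj1, Matrix.one_apply, Ne.symm hj1]
    · simp only [hrowo e0 e1 i hi0 hi1]
      have hpt : ∀ k, (if i = k then (1:ℂ) else 0) * had e0 e1 j k
          = if i = k then had e0 e1 j k else 0 := by
        intro k; by_cases h : i = k <;> simp [h]
      rw [Finset.sum_congr rfl fun k _ => hpt k, Finset.sum_ite_eq, if_pos (Finset.mem_univ i)]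
      by_cases hj0 : j = e0
      · rw [hj0, hrow0]
        simp [hi0, hi1, Matrix.one_apply, fun h : e0 = i => hi0 h.symm]
      · by_cases hj1 : j = e1
        · rw [hj1, hrow1 e0 e1 h01]
          simp [hi0, hi1, Matrix.one_apply, fun h : e1 = i => hi1 h.symm]
        · rw [hrowo e0 e1 j hj0 hj1]
          simp [Matrix.one_apply, eq_comm]

private lemma had_conj (e0 e1 : Fin p) (h01 : e0 ≠ e1) (M : Matrix (Fin p) (Fin p) ℂ) :
    (had e0 e1 * M * (had e0 e1)ᴴ) e0 e0
      = (1/2) * (M e0 e0 + M e0 e1 + M e1 e0 + M e1 e1) := by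
  have h1 : ∀ b, (∑ a, had e0 e1 e0 a * M a b) = rc * M e0 b + rc * M e1 b := by
    intro b
    simp only [hrow0]
    exact sum_two e0 e1 h01 rc rc fun a => M a b
  calc (had e0 e1 * M * (had e0 e1)ᴴ) e0 e0
      = ∑ b, (rc * M e0 b + rc * M e1 b)
          * (if b = e0 then rc else if b = e1 then rc else 0) := by
        simp only [Matrix.mul_apply, Matrix.conjTranspose_apply, had_star_entry]
        simp only [h1]
        simp only [hrow0]
    _ = (rc * M e0 e0 + rc * M e1 e0) * rc + (rc * M e0 e1 + rc * M e1 e1) * rc :=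
        sum_two' e0 e1 h01 rc rc _
    _ = (rc * rc) * (M e0 e0 + M e0 e1 + M e1 e0 + M e1 e1) := by ring
    _ = (1/2) * (M e0 e0 + M e0 e1 + M e1 e0 + M e1 e1) := by rw [rc_mul_rc]

private lemma perm_two {α : Type*} [DecidableEq α] (x y u v : α) (hxy : x ≠ y) (huv : u ≠ v) :
    ∃ s : Equiv.Perm α, s x = u ∧ s y = v := by
  refine ⟨(Equiv.swap x u).trans (Equiv.swap ((Equiv.swap x u) y) v), ?_, ?_⟩
  · have hw : u ≠ (Equiv.swap x u) y := fun hc =>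
      hxy ((Equiv.swap x u).injective ((Equiv.swap_apply_left x u).trans hc))
    rw [Equiv.trans_apply, Equiv.swap_apply_left,
      Equiv.swap_apply_of_ne_of_ne hw huv]
  · rw [Equiv.trans_apply, Equiv.swap_apply_left]

private lemma cancel_ne_one (z φ : ℂ) (h : z = φ * z) (hφ : φ ≠ 1) : z = 0 := by
  have h2 : (φ - 1) * z = 0 := by linear_combination -h
  rcases mul_eq_zero.mp h2 with h3 | h3
  · exact absurd (by linear_combination h3) hφ
  · exact h3

end RadialAux

/-- A random Hermitian matrix with a radial (unitarily invariant) distribution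
and finite second moments has mean `σ I`, and the covariance of its entries has
the form `τ₁ I + τ₂ vec(I) vec(I)ᵀ`: `Cov(a_{ij}, a_{kl})` equals
`τ₁` if `(i,j) = (k,l)`, plus `τ₂` if `i = j` and `k = l`, and vanishes
otherwise, where `τ₁ = Var(a₁₂)` and `τ₂ = Cov(a₁₁, a₂₂)`. -/
theorem radial_distribution_covariance_structure (p : ℕ) (hp : 2 ≤ p)
    {Ω : Type*} [MeasurableSpace Ω] (μ : Measure Ω) [IsProbabilityMeasure μ]
    (A : Ω → Matrix (Fin p) (Fin p) ℂ) (hmeas : AEMeasurable A μ)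
    (hherm : ∀ᵐ ω ∂μ, (A ω)ᴴ = A ω)
    (hint1 : ∀ i j, Integrable (fun ω => A ω i j) μ)
    (hint2 : ∀ i j k l, Integrable (fun ω => A ω i j * star (A ω k l)) μ)
    (hradial : ∀ Q : Matrix.unitaryGroup (Fin p) ℂ,
      μ.map (fun ω => (Q : Matrix (Fin p) (Fin p) ℂ) * A ω
        * (Q : Matrix (Fin p) (Fin p) ℂ)ᴴ) = μ.map A) :
    let m : Fin p → Fin p → ℂ := fun i j => ∫ ω, A ω i j ∂μ
    let cov : Fin p → Fin p → Fin p → Fin p → ℂ := fun i j k l =>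
      ∫ ω, (A ω i j - m i j) * star (A ω k l - m k l) ∂μ
    ∃ σ τ1 τ2 : ℝ,
      (∀ i j : Fin p, m i j = if i = j then (σ : ℂ) else 0) ∧
      (τ1 : ℂ) = cov ⟨0, by omega⟩ ⟨1, by omega⟩ ⟨0, by omega⟩ ⟨1, by omega⟩ ∧
      (τ2 : ℂ) = cov ⟨0, by omega⟩ ⟨0, by omega⟩ ⟨1, by omega⟩ ⟨1, by omega⟩ ∧
      (∀ i j k l : Fin p,
        cov i j k l = (τ1 : ℂ) * (if i = k ∧ j = l then 1 else 0)
          + (τ2 : ℂ) * (if i = j ∧ k = l then 1 else 0)) := by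
  intro m cov
  have hp0 : (0:ℕ) < p := by omega
  have hp1 : (1:ℕ) < p := by omega
  set e0 : Fin p := ⟨0, hp0⟩ with he0
  set e1 : Fin p := ⟨1, hp1⟩ with he1
  have e01 : e0 ≠ e1 := by simp [he0, he1, Fin.ext_iff]
  -- mean invariance under generalized permutations
  have hmean : ∀ (s : Equiv.Perm (Fin p)) (d : Fin p → ℂ), (∀ x, d x * star (d x) = 1) →
      ∀ i j, m i j = d i * star (d j) * m (s i) (s j) := by
    intro s d hd i j
    have htr := transfer_int A hmeas hradial (gpm s d) (gpm_unitary s d hd)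
      (fun M => M i j) (meas_entry i j)
    calc m i j = ∫ ω, A ω i j ∂μ := rfl
      _ = ∫ ω, (gpm s d * A ω * (gpm s d)ᴴ) i j ∂μ := htr.symm
      _ = ∫ ω, (d i * star (d j)) * A ω (s i) (s j) ∂μ := by
          simp only [gpm_conj]
      _ = d i * star (d j) * ∫ ω, A ω (s i) (s j) ∂μ := integral_const_mul _ _
      _ = d i * star (d j) * m (s i) (s j) := rfl
  -- covariance invariance
  have hcovinv : ∀ (s : Equiv.Perm (Fin p)) (d : Fin p → ℂ), (∀ x, d x * star (d x) = 1) →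
      ∀ i j k l, cov i j k l
        = (d i * star (d j) * star (d k) * d l) * cov (s i) (s j) (s k) (s l) := by
    intro s d hd i j k l
    have hf : Measurable (fun M : Matrix (Fin p) (Fin p) ℂ =>
        (M i j - m i j) * star (M k l - m k l)) :=
      ((meas_entry i j).sub measurable_const).mul
        (continuous_star.measurable.comp ((meas_entry k l).sub measurable_const))
    have htr := transfer_int A hmeas hradial (gpm s d) (gpm_unitary s d hd) _ hf
    calc cov i j k l = ∫ ω, (A ω i j - m i j) * star (A ω k l - m k l) ∂μ := rfl
      _ = ∫ ω, ((gpm s d * A ω * (gpm s d)ᴴ) i j - m i j)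
            * star ((gpm s d * A ω * (gpm s d)ᴴ) k l - m k l) ∂μ := htr.symm
      _ = ∫ ω, (d i * star (d j) * star (d k) * d l)
            * ((A ω (s i) (s j) - m (s i) (s j)) * star (A ω (s k) (s l) - m (s k) (s l))) ∂μ := by
          refine integral_congr_ae (Filter.Eventually.of_forall fun ω => ?_)
          show ((gpm s d * A ω * (gpm s d)ᴴ) i j - m i j)
              * star ((gpm s d * A ω * (gpm s d)ᴴ) k l - m k l)
              = (d i * star (d j) * star (d k) * d l)
                * ((A ω (s i) (s j) - m (s i) (s j)) * star (A ω (s k) (s l) - m (s k) (s l)))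
          rw [gpm_conj, gpm_conj, hmean s d hd i j, hmean s d hd k l]
          simp only [star_sub, star_mul', star_star]
          ring
      _ = (d i * star (d j) * star (d k) * d l) * cov (s i) (s j) (s k) (s l) :=
          integral_const_mul _ _
  -- mean structure
  have hm0 : ∀ i j : Fin p, i ≠ j → m i j = 0 := by
    intro i j hij
    have hd : ∀ x : Fin p, (if x = i then (-1:ℂ) else 1) * star (if x = i then (-1:ℂ) else 1)
        = 1 := by
      intro x; by_cases hx : x = i <;> simp [hx]
    have h := hmean 1 (fun x => if x = i then (-1:ℂ) else 1) hd i j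
    simp only [Equiv.Perm.coe_one, id_eq, eq_self_iff_true, if_true,
      if_neg (Ne.symm hij)] at h
    simp only [star_one, mul_one, neg_one_mul] at h
    linear_combination (1/2 : ℂ) * h
  have hdiagm : ∀ i : Fin p, m i i = m e0 e0 := by
    intro i
    have h := hmean (Equiv.swap i e0) (fun _ => (1:ℂ)) (by intro x; simp) i i
    simpa [Equiv.swap_apply_left] using h
  have hstar00 : (starRingEnd ℂ) (m e0 e0) = m e0 e0 := by
    have : m e0 e0 = ∫ ω, A ω e0 e0 ∂μ := rfl
    rw [this, ← integral_conj]
    refine integral_congr_ae ?_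
    filter_upwards [hherm] with ω h
    have h2 := congrFun (congrFun h e0) e0
    rw [Matrix.conjTranspose_apply] at h2
    exact h2
  have hm00 : m e0 e0 = ((m e0 e0).re : ℂ) := (Complex.conj_eq_iff_re.mp hstar00).symm
  have hmS : ∀ i j : Fin p, m i j = if i = j then ((m e0 e0).re : ℂ) else 0 := by
    intro i j
    by_cases h : i = j
    · subst h; rw [if_pos rfl, ← hm00]; exact hdiagm i
    · rw [if_neg h]; exact hm0 i j h
  -- permutation invariance of cov
  have hcovperm : ∀ (s : Equiv.Perm (Fin p)) (i j k l : Fin p),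
      cov i j k l = cov (s i) (s j) (s k) (s l) := by
    intro s i j k l
    have := hcovinv s (fun _ => (1:ℂ)) (by intro x; simp) i j k l
    simpa using this
  -- vanishing covariances
  have hzero : ∀ i j k l : Fin p, ¬(i = k ∧ j = l) → ¬(i = j ∧ k = l) → cov i j k l = 0 := by
    intro i j k l h1 h2
    have hIne : (star Complex.I : ℂ) ≠ 1 := by
      rw [show (star Complex.I : ℂ) = -Complex.I from by
        simp [Complex.star_def, Complex.conj_I]]
      intro hc
      have := congrArg Complex.im hc
      simp at this
    by_cases hij : i = j
    · subst hij
      have hkl : k ≠ l := fun hc => h2 ⟨rfl, hc⟩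
      have hd : ∀ x : Fin p,
          (if x = k then Complex.I else 1) * star (if x = k then Complex.I else 1) = 1 := by
        intro x; by_cases hx : x = k <;> simp [hx]
      have h := hcovinv 1 (fun x => if x = k then Complex.I else 1) hd i i k l
      simp only [Equiv.Perm.coe_one, id_eq] at h
      rw [if_true, if_neg (fun hc : l = k => hkl hc.symm)] at h
      rw [show ((if i = k then Complex.I else 1) * star (if i = k then Complex.I else 1) : ℂ)
        = 1 from hd i] at h
      rw [one_mul, mul_one] at h
      exact cancel_ne_one _ _ h hIne
    · by_cases hik : i = k
      · subst hik
        have hjl : j ≠ l := fun hc => h1 ⟨rfl, hc⟩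
        have hd : ∀ x : Fin p,
            (if x = j then Complex.I else 1) * star (if x = j then Complex.I else 1) = 1 := by
          intro x; by_cases hx : x = j <;> simp [hx]
        have h := hcovinv 1 (fun x => if x = j then Complex.I else 1) hd i j i l
        simp only [Equiv.Perm.coe_one, id_eq] at h
        rw [if_neg hij, if_true, if_neg (fun hc : l = j => hjl hc.symm)] at h
        rw [one_mul, star_one, mul_one, mul_one] at h
        exact cancel_ne_one _ _ h hIne
      · have hd : ∀ x : Fin p,
            (if x = i then Complex.I else 1) * star (if x = i then Complex.I else 1) = 1 := by
          intro x; by_cases hx : x = i <;> simp [hx]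
        have h := hcovinv 1 (fun x => if x = i then Complex.I else 1) hd i j k l
        simp only [Equiv.Perm.coe_one, id_eq] at h
        rw [if_true, if_neg (fun hc : j = i => hij hc.symm),
          if_neg (fun hc : k = i => hik hc.symm)] at h
        rw [star_one, mul_one, mul_one] at h
        by_cases hli : l = i
        · rw [if_pos hli, Complex.I_mul_I] at h
          exact cancel_ne_one _ _ h (by norm_num)
        · rw [if_neg hli, mul_one] at h
          refine cancel_ne_one _ _ h fun hc => ?_
          have := congrArg Complex.im hc
          simp at this
  -- classes
  have hτ1 : ∀ i j : Fin p, i ≠ j → cov i j i j = cov e0 e1 e0 e1 := by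
    intro i j hij
    obtain ⟨s, hs0, hs1⟩ := perm_two e0 e1 i j e01 hij
    have h := hcovperm s e0 e1 e0 e1
    rw [hs0, hs1] at h
    exact h.symm
  have hτ2 : ∀ i k : Fin p, i ≠ k → cov i i k k = cov e0 e0 e1 e1 := by
    intro i k hik
    obtain ⟨s, hs0, hs1⟩ := perm_two e0 e1 i k e01 hik
    have h := hcovperm s e0 e0 e1 e1
    rw [hs0, hs1] at h
    exact h.symm
  have hdiagc : ∀ i : Fin p, cov i i i i = cov e0 e0 e0 e0 := by
    intro i
    have h := hcovperm (Equiv.swap e0 i) e0 e0 e0 e0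
    rw [Equiv.swap_apply_left] at h
    exact h.symm
  -- the key diagonal identity via the Hadamard rotation
  have htau0 : cov e0 e0 e0 e0 = cov e0 e1 e0 e1 + cov e0 e0 e1 e1 := by
    have hstarint : ∀ k l : Fin p, Integrable (fun ω => star (A ω k l)) μ := fun k l =>
      (Complex.conjCLE.toContinuousLinearMap).integrable_comp (hint1 k l)
    have hcint : ∀ i j k l : Fin p,
        Integrable (fun ω => (A ω i j - m i j) * star (A ω k l - m k l)) μ := by
      intro i j k l
      have heq : (fun ω => (A ω i j - m i j) * star (A ω k l - m k l))
          = fun ω => A ω i j * star (A ω k l) - m i j * star (A ω k l)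
              - star (m k l) * A ω i j + m i j * star (m k l) := by
        funext ω; rw [star_sub]; ring
      rw [heq]
      exact (((hint2 i j k l).sub ((hstarint k l).const_mul (m i j))).sub
        ((hint1 i j).const_mul (star (m k l)))).add (integrable_const _)
    set g : Fin p → Fin p → Ω → ℂ := fun a b ω => A ω a b - m a b with hg
    set S : Ω → ℂ := fun ω => g e0 e0 ω + g e0 e1 ω + g e1 e0 ω + g e1 e1 ω with hS
    have hgi : ∀ a b c d : Fin p, Integrable (fun ω => g a b ω * star (g c d ω)) μ :=
      fun a b c d => hcint a b c d
    have hgS : ∀ a b : Fin p, (fun ω => g a b ω * star (S ω))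
        = fun ω => g a b ω * star (g e0 e0 ω) + g a b ω * star (g e0 e1 ω)
            + g a b ω * star (g e1 e0 ω) + g a b ω * star (g e1 e1 ω) := by
      intro a b; funext ω
      simp only [hS]
      rw [star_add, star_add, star_add]; ring
    have hintS : ∀ a b : Fin p, Integrable (fun ω => g a b ω * star (S ω)) μ := by
      intro a b
      rw [hgS]
      exact (((hgi a b e0 e0).add (hgi a b e0 e1)).add (hgi a b e1 e0)).add (hgi a b e1 e1)
    have hIS : ∀ a b : Fin p, ∫ ω, g a b ω * star (S ω) ∂μ
        = cov a b e0 e0 + cov a b e0 e1 + cov a b e1 e0 + cov a b e1 e1 := by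
      intro a b
      have i1 : Integrable (fun ω => g a b ω * star (g e0 e0 ω)
          + g a b ω * star (g e0 e1 ω)) μ := (hgi a b e0 e0).add (hgi a b e0 e1)
      have i2 : Integrable (fun ω => g a b ω * star (g e0 e0 ω) + g a b ω * star (g e0 e1 ω)
          + g a b ω * star (g e1 e0 ω)) μ := i1.add (hgi a b e1 e0)
      calc ∫ ω, g a b ω * star (S ω) ∂μ
          = ∫ ω, (g a b ω * star (g e0 e0 ω) + g a b ω * star (g e0 e1 ω)
              + g a b ω * star (g e1 e0 ω)) + g a b ω * star (g e1 e1 ω) ∂μ := by rw [hgS]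
        _ = (∫ ω, g a b ω * star (g e0 e0 ω) + g a b ω * star (g e0 e1 ω)
              + g a b ω * star (g e1 e0 ω) ∂μ) + ∫ ω, g a b ω * star (g e1 e1 ω) ∂μ :=
            integral_add i2 (hgi a b e1 e1)
        _ = ((∫ ω, g a b ω * star (g e0 e0 ω) + g a b ω * star (g e0 e1 ω) ∂μ)
              + ∫ ω, g a b ω * star (g e1 e0 ω) ∂μ) + ∫ ω, g a b ω * star (g e1 e1 ω) ∂μ := by
            rw [integral_add i1 (hgi a b e1 e0)]
        _ = (((∫ ω, g a b ω * star (g e0 e0 ω) ∂μ) + ∫ ω, g a b ω * star (g e0 e1 ω) ∂μ)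
              + ∫ ω, g a b ω * star (g e1 e0 ω) ∂μ) + ∫ ω, g a b ω * star (g e1 e1 ω) ∂μ := by
            rw [integral_add (hgi a b e0 e0) (hgi a b e0 e1)]
        _ = cov a b e0 e0 + cov a b e0 e1 + cov a b e1 e0 + cov a b e1 e1 := rfl
    have hSs : ∫ ω, S ω * star (S ω) ∂μ
        = (cov e0 e0 e0 e0 + cov e0 e0 e0 e1 + cov e0 e0 e1 e0 + cov e0 e0 e1 e1)
        + (cov e0 e1 e0 e0 + cov e0 e1 e0 e1 + cov e0 e1 e1 e0 + cov e0 e1 e1 e1)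
        + (cov e1 e0 e0 e0 + cov e1 e0 e0 e1 + cov e1 e0 e1 e0 + cov e1 e0 e1 e1)
        + (cov e1 e1 e0 e0 + cov e1 e1 e0 e1 + cov e1 e1 e1 e0 + cov e1 e1 e1 e1) := by
      have hSmul : (fun ω => S ω * star (S ω))
          = fun ω => g e0 e0 ω * star (S ω) + g e0 e1 ω * star (S ω)
              + g e1 e0 ω * star (S ω) + g e1 e1 ω * star (S ω) := by
        funext ω
        conv_lhs => rw [hS]
        ring
      have j1 : Integrable (fun ω => g e0 e0 ω * star (S ω) + g e0 e1 ω * star (S ω)) μ :=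
        (hintS e0 e0).add (hintS e0 e1)
      have j2 : Integrable (fun ω => g e0 e0 ω * star (S ω) + g e0 e1 ω * star (S ω)
          + g e1 e0 ω * star (S ω)) μ := j1.add (hintS e1 e0)
      calc ∫ ω, S ω * star (S ω) ∂μ
          = ∫ ω, (g e0 e0 ω * star (S ω) + g e0 e1 ω * star (S ω)
              + g e1 e0 ω * star (S ω)) + g e1 e1 ω * star (S ω) ∂μ := by rw [hSmul]
        _ = (∫ ω, g e0 e0 ω * star (S ω) + g e0 e1 ω * star (S ω)
              + g e1 e0 ω * star (S ω) ∂μ) + ∫ ω, g e1 e1 ω * star (S ω) ∂μ :=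
            integral_add j2 (hintS e1 e1)
        _ = ((∫ ω, g e0 e0 ω * star (S ω) + g e0 e1 ω * star (S ω) ∂μ)
              + ∫ ω, g e1 e0 ω * star (S ω) ∂μ) + ∫ ω, g e1 e1 ω * star (S ω) ∂μ := by
            rw [integral_add j1 (hintS e1 e0)]
        _ = (((∫ ω, g e0 e0 ω * star (S ω) ∂μ) + ∫ ω, g e0 e1 ω * star (S ω) ∂μ)
              + ∫ ω, g e1 e0 ω * star (S ω) ∂μ) + ∫ ω, g e1 e1 ω * star (S ω) ∂μ := by
            rw [integral_add (hintS e0 e0) (hintS e0 e1)]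
        _ = (cov e0 e0 e0 e0 + cov e0 e0 e0 e1 + cov e0 e0 e1 e0 + cov e0 e0 e1 e1)
            + (cov e0 e1 e0 e0 + cov e0 e1 e0 e1 + cov e0 e1 e1 e0 + cov e0 e1 e1 e1)
            + (cov e1 e0 e0 e0 + cov e1 e0 e0 e1 + cov e1 e0 e1 e0 + cov e1 e0 e1 e1)
            + (cov e1 e1 e0 e0 + cov e1 e1 e0 e1 + cov e1 e1 e1 e0 + cov e1 e1 e1 e1) := by
            rw [hIS e0 e0, hIS e0 e1, hIS e1 e0, hIS e1 e1]
    have hf : Measurable (fun M : Matrix (Fin p) (Fin p) ℂ =>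
        (M e0 e0 - m e0 e0) * star (M e0 e0 - m e0 e0)) :=
      ((meas_entry e0 e0).sub measurable_const).mul
        (continuous_star.measurable.comp ((meas_entry e0 e0).sub measurable_const))
    have htr := transfer_int A hmeas hradial (had e0 e1) (had_unitary e0 e1 e01) _ hf
    have hL : ∫ ω, ((had e0 e1 * A ω * (had e0 e1)ᴴ) e0 e0 - m e0 e0)
        * star ((had e0 e1 * A ω * (had e0 e1)ᴴ) e0 e0 - m e0 e0) ∂μ
        = ∫ ω, (1/4 : ℂ) * (S ω * star (S ω)) ∂μ := by
      refine integral_congr_ae (Filter.Eventually.of_forall fun ω => ?_)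
      show ((had e0 e1 * A ω * (had e0 e1)ᴴ) e0 e0 - m e0 e0)
          * star ((had e0 e1 * A ω * (had e0 e1)ᴴ) e0 e0 - m e0 e0)
          = (1/4 : ℂ) * (S ω * star (S ω))
      rw [had_conj e0 e1 e01]
      have hhalf : (1/2 : ℂ) * (A ω e0 e0 + A ω e0 e1 + A ω e1 e0 + A ω e1 e1) - m e0 e0
          = (1/2 : ℂ) * S ω := by
        simp only [hS, hg]
        rw [hm0 e0 e1 e01, hm0 e1 e0 (Ne.symm e01), hdiagm e1]
        ring
      rw [hhalf, star_mul']
      rw [show star ((1:ℂ)/2) = (1/2 : ℂ) from by norm_num]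
      ring
    have hmain : cov e0 e0 e0 e0 = (1/4 : ℂ) * ∫ ω, S ω * star (S ω) ∂μ := by
      calc cov e0 e0 e0 e0
          = ∫ ω, (A ω e0 e0 - m e0 e0) * star (A ω e0 e0 - m e0 e0) ∂μ := rfl
        _ = ∫ ω, ((had e0 e1 * A ω * (had e0 e1)ᴴ) e0 e0 - m e0 e0)
              * star ((had e0 e1 * A ω * (had e0 e1)ᴴ) e0 e0 - m e0 e0) ∂μ := htr.symm
        _ = ∫ ω, (1/4 : ℂ) * (S ω * star (S ω)) ∂μ := hL
        _ = (1/4 : ℂ) * ∫ ω, S ω * star (S ω) ∂μ := integral_const_mul _ _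
    rw [hSs] at hmain
    have z1 : cov e0 e0 e0 e1 = 0 :=
      hzero _ _ _ _ (fun hc => e01 hc.2) (fun hc => e01 hc.2)
    have z2 : cov e0 e0 e1 e0 = 0 :=
      hzero _ _ _ _ (fun hc => e01 hc.1) (fun hc => e01 hc.2.symm)
    have z3 : cov e0 e1 e0 e0 = 0 :=
      hzero _ _ _ _ (fun hc => e01 hc.2.symm) (fun hc => e01 hc.1)
    have z4 : cov e0 e1 e1 e0 = 0 :=
      hzero _ _ _ _ (fun hc => e01 hc.1) (fun hc => e01 hc.1)
    have z5 : cov e0 e1 e1 e1 = 0 :=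
      hzero _ _ _ _ (fun hc => e01 hc.1) (fun hc => e01 hc.1)
    have z6 : cov e1 e0 e0 e0 = 0 :=
      hzero _ _ _ _ (fun hc => e01 hc.1.symm) (fun hc => e01 hc.1.symm)
    have z7 : cov e1 e0 e0 e1 = 0 :=
      hzero _ _ _ _ (fun hc => e01 hc.1.symm) (fun hc => e01 hc.1.symm)
    have z8 : cov e1 e0 e1 e1 = 0 :=
      hzero _ _ _ _ (fun hc => e01 hc.2) (fun hc => e01 hc.1.symm)
    have z9 : cov e1 e1 e0 e1 = 0 :=
      hzero _ _ _ _ (fun hc => e01 hc.1.symm) (fun hc => e01 hc.2)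
    have z10 : cov e1 e1 e1 e0 = 0 :=
      hzero _ _ _ _ (fun hc => e01 hc.2.symm) (fun hc => e01 hc.2.symm)
    rw [z1, z2, z3, z4, z5, z6, z7, z8, z9, z10, hτ1 e1 e0 (Ne.symm e01),
      hτ2 e1 e0 (Ne.symm e01), hdiagc e1] at hmain
    linear_combination 2 * hmain
  -- realness
  have hre1 : (starRingEnd ℂ) (cov e0 e1 e0 e1) = cov e0 e1 e0 e1 := by
    have : cov e0 e1 e0 e1 = ∫ ω, (A ω e0 e1 - m e0 e1) * star (A ω e0 e1 - m e0 e1) ∂μ := rfl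
    rw [this, ← integral_conj]
    refine integral_congr_ae (Filter.Eventually.of_forall fun ω => ?_)
    show (starRingEnd ℂ) ((A ω e0 e1 - m e0 e1) * star (A ω e0 e1 - m e0 e1))
        = (A ω e0 e1 - m e0 e1) * star (A ω e0 e1 - m e0 e1)
    rw [show star (A ω e0 e1 - m e0 e1) = (starRingEnd ℂ) (A ω e0 e1 - m e0 e1) from rfl,
      _root_.map_mul, Complex.conj_conj, mul_comm]
  have hre2 : (starRingEnd ℂ) (cov e0 e0 e1 e1) = cov e0 e0 e1 e1 := by
    have hrw : cov e0 e0 e1 e1 = ∫ ω, (A ω e0 e0 - m e0 e0) * star (A ω e1 e1 - m e1 e1) ∂μ := rfl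
    rw [hrw, ← integral_conj]
    refine integral_congr_ae ?_
    filter_upwards [hherm] with ω h
    have h00 := congrFun (congrFun h e0) e0
    have h11 := congrFun (congrFun h e1) e1
    rw [Matrix.conjTranspose_apply] at h00 h11
    have hm11 : (starRingEnd ℂ) (m e1 e1) = m e1 e1 := by
      rw [hdiagm e1]; exact hstar00
    have hz : (starRingEnd ℂ) (A ω e0 e0 - m e0 e0) = A ω e0 e0 - m e0 e0 := by
      rw [map_sub, show (starRingEnd ℂ) (A ω e0 e0) = A ω e0 e0 from h00, hstar00]
    have hw : (starRingEnd ℂ) (A ω e1 e1 - m e1 e1) = A ω e1 e1 - m e1 e1 := by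
      rw [map_sub, show (starRingEnd ℂ) (A ω e1 e1) = A ω e1 e1 from h11, hm11]
    show (starRingEnd ℂ) ((A ω e0 e0 - m e0 e0) * star (A ω e1 e1 - m e1 e1))
        = (A ω e0 e0 - m e0 e0) * star (A ω e1 e1 - m e1 e1)
    rw [show star (A ω e1 e1 - m e1 e1) = (starRingEnd ℂ) (A ω e1 e1 - m e1 e1) from rfl, hw,
      _root_.map_mul, hz, hw]
  refine ⟨(m e0 e0).re, (cov e0 e1 e0 e1).re, (cov e0 e0 e1 e1).re, hmS, ?_, ?_, ?_⟩
  · exact Complex.conj_eq_iff_re.mp hre1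
  · exact Complex.conj_eq_iff_re.mp hre2
  · have hτ1R : ((cov e0 e1 e0 e1).re : ℂ) = cov e0 e1 e0 e1 := Complex.conj_eq_iff_re.mp hre1
    have hτ2R : ((cov e0 e0 e1 e1).re : ℂ) = cov e0 e0 e1 e1 := Complex.conj_eq_iff_re.mp hre2
    intro i j k l
    by_cases h1 : i = k ∧ j = l
    · obtain ⟨hik, hjl⟩ := h1
      subst hik; subst hjl
      by_cases hij : i = j
      · subst hij
        simp only [and_self, eq_self_iff_true, if_true, mul_one]
        rw [hdiagc i, htau0, hτ1R, hτ2R]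
      · simp only [and_self, eq_self_iff_true, if_true, if_neg hij, mul_one, mul_zero, add_zero]
        rw [hτ1 i j hij]
        exact hτ1R.symm
    · by_cases h2 : i = j ∧ k = l
      · obtain ⟨hij, hkl⟩ := h2
        subst hij; subst hkl
        have hik : i ≠ k := fun hc => h1 ⟨hc, hc⟩
        simp only [and_self, eq_self_iff_true, if_true, if_neg hik, mul_one, mul_zero, zero_add]
        rw [hτ2 i k hik]
        exact hτ2R.symm
      · rw [hzero i j k l h1 h2, if_neg h1, if_neg h2]
        ring
end

section
/- Let M be Hermitian positive definite with Hermitian square root M^{1/2}, and let τ₁ ≥ 0, τ₂ ≥ -τ₁/p. Then the p²×p² matrix τ₁(M* ⊗ M) + τ₂vec(M)vec(M)ᴴ is positive semidefinite, and its trace equals τ₁tr(M)² + τ₂tr(M²). -/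
open Matrix Kronecker
open scoped ComplexOrder

/-- For Hermitian positive definite `M` and `τ₁ ≥ 0`, `τ₂ ≥ -τ₁/p`, the matrix
`τ₁ (M* ⊗ M) + τ₂ vec(M) vec(M)ᴴ` is positive semidefinite, with trace
`τ₁ tr(M)² + τ₂ tr(M²)`. -/
theorem variance_matrix_psd_and_trace (p : ℕ) (hp : 0 < p)
    (M R : Matrix (Fin p) (Fin p) ℂ) (hM : M.PosDef) (hR : R.PosDef)
    (hRH : Rᴴ = R) (hsq : R * R = M)
    (τ1 τ2 : ℝ) (hτ1 : 0 ≤ τ1) (hτ2 : -τ1 / p ≤ τ2) :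
    let vecM : Fin p × Fin p → ℂ := fun ji => M ji.2 ji.1
    let V : Matrix (Fin p × Fin p) (Fin p × Fin p) ℂ :=
      (τ1 : ℂ) • (M.map (starRingEnd ℂ) ⊗ₖ M)
        + (τ2 : ℂ) • Matrix.vecMulVec vecM (fun b => star (vecM b))
    V.PosSemidef ∧ V.trace = (τ1 : ℂ) * M.trace ^ 2 + (τ2 : ℂ) * (M * M).trace := by
  intro vecM V
  have hRst : ∀ i j, star (R i j) = R j i := by
    intro i j
    have := congrFun (congrFun hRH j) i
    simpa [Matrix.conjTranspose_apply] using this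
  have hMst : ∀ i j, star (M i j) = M j i := by
    intro i j
    have := congrFun (congrFun hM.isHermitian j) i
    simpa [Matrix.conjTranspose_apply] using this
  -- the vectorized identity and the square-root Kronecker factor
  set u : Fin p × Fin p → ℂ := fun ji => (1 : Matrix (Fin p) (Fin p) ℂ) ji.2 ji.1 with hu
  set S : Matrix (Fin p × Fin p) (Fin p × Fin p) ℂ := R.map (starRingEnd ℂ) ⊗ₖ R with hSdef
  have hS : Sᴴ = S := by
    ext ⟨a, b⟩ ⟨c, d⟩
    simp only [hSdef, Matrix.conjTranspose_apply, Matrix.kroneckerMap_apply, Matrix.map_apply,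
      star_mul']
    rw [starRingEnd_apply, star_star]
    rw [show star (R d b) = R b d from hRst d b, show R c a = star (R a c) from (hRst a c).symm,
      starRingEnd_apply]
  have hSS : S * S = M.map (starRingEnd ℂ) ⊗ₖ M := by
    rw [hSdef, ← Matrix.mul_kronecker_mul, ← Matrix.map_mul, hsq]
  have hvec : vecM = S *ᵥ u := by
    funext ji
    obtain ⟨j, i⟩ := ji
    simp only [Matrix.mulVec, dotProduct, hSdef, hu, Fintype.sum_prod_type,
      Matrix.kroneckerMap_apply, Matrix.map_apply, Matrix.one_apply, mul_ite, mul_one, mul_zero]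
    have : ∀ l : Fin p, (∑ k : Fin p, if k = l then starRingEnd ℂ (R j l) * R i k else 0)
        = starRingEnd ℂ (R j l) * R i l := by
      intro l
      simp
    rw [Finset.sum_congr rfl fun l _ => this l]
    show vecM (j, i) = _
    simp only [vecM, ← hsq, Matrix.mul_apply]
    refine Finset.sum_congr rfl fun l _ => ?_
    rw [show R l j = star (R j l) from (hRst j l).symm, starRingEnd_apply, mul_comm]
  -- the "middle" matrix
  set D : Matrix (Fin p × Fin p) (Fin p × Fin p) ℂ :=
    (τ1 : ℂ) • (1 : Matrix (Fin p × Fin p) (Fin p × Fin p) ℂ)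
      + (τ2 : ℂ) • Matrix.vecMulVec u (star u) with hDdef
  have hust : star u = u := by
    funext ji
    simp [hu, Matrix.one_apply, apply_ite (star : ℂ → ℂ)]
  have hDH : D.IsHermitian := by
    show Dᴴ = D
    ext a b
    simp only [hDdef, Matrix.conjTranspose_apply, Matrix.add_apply, Matrix.smul_apply,
      Matrix.one_apply, Matrix.vecMulVec_apply, Pi.star_apply, smul_eq_mul, star_add, star_mul']
    rw [star_star]
    have h1 : ∀ x y : Fin p × Fin p,
        star ((if x = y then (1 : ℂ) else 0)) = if y = x then (1 : ℂ) else 0 := by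
      intro x y
      simp [apply_ite (star : ℂ → ℂ), eq_comm]
    rw [h1]
    have hur : ∀ k, star (u k) = u k := fun k => congrFun hust k
    simp [Complex.conj_ofReal, hur, mul_comm]
  have hvv : ∀ w v x : Fin p × Fin p → ℂ,
      Matrix.vecMulVec w v *ᵥ x = (v ⬝ᵥ x) • w := by
    intro w v x
    funext a
    simp only [Matrix.mulVec, dotProduct, Matrix.vecMulVec_apply, Pi.smul_apply,
      smul_eq_mul, Finset.sum_mul]
    exact Finset.sum_congr rfl fun b _ => by ring
  have hdiag : ∀ x : Fin p × Fin p → ℂ, u ⬝ᵥ x = ∑ i : Fin p, x (i, i) := by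
    intro x
    simp [dotProduct, hu, Fintype.sum_prod_type, Matrix.one_apply, ite_mul]
  have hD : D.PosSemidef := by
    refine Matrix.PosSemidef.of_dotProduct_mulVec_nonneg hDH fun x => ?_
    have hstep : star x ⬝ᵥ (D *ᵥ x)
        = (τ1 : ℂ) * (star x ⬝ᵥ x) + (τ2 : ℂ) * ((star x ⬝ᵥ u) * (u ⬝ᵥ x)) := by
      rw [hDdef, Matrix.add_mulVec, Matrix.smul_mulVec, Matrix.smul_mulVec,
        Matrix.one_mulVec, hvv, hust, dotProduct_add, dotProduct_smul,
        dotProduct_smul, dotProduct_smul, smul_eq_mul, smul_eq_mul, smul_eq_mul]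
      ring
    set c : ℂ := ∑ i : Fin p, x (i, i) with hc
    have h1 : star x ⬝ᵥ x = ((∑ k : Fin p × Fin p, Complex.normSq (x k) : ℝ) : ℂ) := by
      simp only [dotProduct, Pi.star_apply]
      push_cast
      refine Finset.sum_congr rfl fun k _ => ?_
      rw [mul_comm]
      exact Complex.mul_conj (x k)
    have h2 : star x ⬝ᵥ u = starRingEnd ℂ c := by
      rw [hc, map_sum]
      simp only [dotProduct, Pi.star_apply, hu, Fintype.sum_prod_type, Matrix.one_apply,
        mul_ite, mul_one, mul_zero, Finset.sum_ite_eq', Finset.mem_univ, if_true]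
      rfl
    have h3 : (starRingEnd ℂ c) * (u ⬝ᵥ x) = ((Complex.normSq c : ℝ) : ℂ) := by
      rw [hdiag, ← hc, mul_comm, Complex.mul_conj]
    rw [hstep, h1, h2, h3]
    set Sx : ℝ := ∑ k : Fin p × Fin p, Complex.normSq (x k) with hSx
    have hkey : Complex.normSq c ≤ (p : ℝ) * Sx := by
      have hb1 : Complex.normSq c = ‖c‖ ^ 2 := by
        rw [Complex.normSq_eq_norm_sq]
      have hb2 : ‖c‖ ≤ ∑ i : Fin p, ‖x (i, i)‖ := norm_sum_le _ _
      have hb3 : ‖c‖ ^ 2 ≤ (∑ i : Fin p, ‖x (i, i)‖) ^ 2 := by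
        exact pow_le_pow_left₀ (norm_nonneg _) hb2 2
      have hb4 : (∑ i : Fin p, ‖x (i, i)‖) ^ 2
          ≤ (p : ℝ) * ∑ i : Fin p, ‖x (i, i)‖ ^ 2 := by
        simpa using sq_sum_le_card_mul_sum_sq
          (s := (Finset.univ : Finset (Fin p))) (f := fun i => ‖x (i, i)‖)
      have hb5 : (∑ i : Fin p, ‖x (i, i)‖ ^ 2) ≤ Sx := by
        have : (∑ i : Fin p, Complex.normSq (x (i, i))) ≤ Sx := by
          rw [hSx, Fintype.sum_prod_type]
          refine Finset.sum_le_sum fun l _ => ?_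
          exact Finset.single_le_sum (f := fun y => Complex.normSq (x (l, y)))
            (fun k _ => Complex.normSq_nonneg _) (Finset.mem_univ l)
        refine le_trans (le_of_eq ?_) this
        refine Finset.sum_congr rfl fun i _ => ?_
        rw [Complex.normSq_eq_norm_sq]
      have hp' : (0 : ℝ) < p := by exact_mod_cast hp
      nlinarith [hb1, hb3, hb4, hb5]
    have hSx0 : 0 ≤ Sx := Finset.sum_nonneg fun k _ => Complex.normSq_nonneg _
    have hc0 : 0 ≤ Complex.normSq c := Complex.normSq_nonneg _
    have hp' : (0 : ℝ) < p := by exact_mod_cast hp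
    have hreal : 0 ≤ τ1 * Sx + τ2 * Complex.normSq c := by
      have ht : -τ1 / p * Complex.normSq c ≤ τ2 * Complex.normSq c :=
        mul_le_mul_of_nonneg_right hτ2 hc0
      have ht2 : -τ1 / p * ((p : ℝ) * Sx) ≤ -τ1 / p * Complex.normSq c := by
        apply mul_le_mul_of_nonpos_left hkey
        exact div_nonpos_iff.mpr (Or.inr ⟨by linarith, hp'.le⟩)
      have heq : -τ1 / p * ((p : ℝ) * Sx) = -(τ1 * Sx) := by
        field_simp
      linarith
    calc (0 : ℂ) = ((0 : ℝ) : ℂ) := by norm_num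
      _ ≤ (((τ1 * Sx + τ2 * Complex.normSq c : ℝ)) : ℂ) := by
          exact_mod_cast Complex.zero_le_real.mpr hreal
      _ = (τ1 : ℂ) * ((Sx : ℝ) : ℂ) + (τ2 : ℂ) * ((Complex.normSq c : ℝ) : ℂ) := by
          push_cast; ring
  -- the congruence identity
  have hmid : S * Matrix.vecMulVec u (star u) * S = Matrix.vecMulVec vecM (star vecM) := by
    have e1 : Matrix.replicateCol Unit vecM = S * Matrix.replicateCol Unit u := by
      rw [hvec, Matrix.replicateCol_mulVec]
    have e2 : Matrix.replicateRow Unit (star vecM) = Matrix.replicateRow Unit (star u) * S := by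
      conv_rhs => rw [← hS]
      rw [hvec, Matrix.star_mulVec, Matrix.replicateRow_vecMul]
    rw [Matrix.vecMulVec_eq Unit, Matrix.vecMulVec_eq Unit, e1, e2]
    simp only [Matrix.mul_assoc]
  have hV : V = S * D * Sᴴ := by
    rw [hS, hDdef, Matrix.mul_add, Matrix.add_mul, Matrix.mul_smul, Matrix.smul_mul,
      Matrix.mul_one, hSS, Matrix.mul_smul, Matrix.smul_mul, hmid]
    show ((τ1 : ℂ) • (M.map (starRingEnd ℂ) ⊗ₖ M)
        + (τ2 : ℂ) • Matrix.vecMulVec vecM (fun b => star (vecM b))) = _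
    rfl
  constructor
  · rw [hV]
    exact hD.mul_mul_conjTranspose_same S
  · -- trace computation
    show ((τ1 : ℂ) • (M.map (starRingEnd ℂ) ⊗ₖ M)
        + (τ2 : ℂ) • Matrix.vecMulVec vecM (fun b => star (vecM b))).trace = _
    rw [Matrix.trace_add, Matrix.trace_smul, Matrix.trace_smul, Matrix.trace_kronecker]
    have htrM : (M.map (starRingEnd ℂ)).trace = M.trace := by
      simp only [Matrix.trace, Matrix.diag, Matrix.map_apply]
      exact Finset.sum_congr rfl fun i _ => hMst i i
    have htrv : (Matrix.vecMulVec vecM (fun b => star (vecM b))).trace = (M * M).trace := by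
      simp only [Matrix.trace, Matrix.diag, Matrix.vecMulVec_apply, Matrix.mul_apply,
        Fintype.sum_prod_type]
      rw [Finset.sum_comm]
      refine Finset.sum_congr rfl fun i _ => Finset.sum_congr rfl fun j _ => ?_
      show M i j * star (M i j) = _
      rw [hMst i j]
    rw [htrM, htrv, smul_eq_mul, smul_eq_mul, ← sq]
end
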